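/- Let G be a connected digraph, u ≠ v vertices with no edge from u to v, and suppose there exists a cover tour from u to v. If P(L(u,v)) ≤ P(L(x,v)) for every out-neighbor x of u (in particular if all these probabilities are equal), then every cover tour from u to v revisits u. -/

import Mathlib

open scoped ENNReal BigOperators

/-!
Suppose a cover tour `T` from `u` to `v` visits `u` only once. Prepending `u` to a cover tour
from an out-neighbour `x` of `u` gives a cover tour from `u` to `v` (as `u ≠ v`) which revisits
`u`, of weight `1 / deg u` times the original one. These tours are distinct from each other and
from `T`, so
`P(L(u,v)) ≥ wt T + (1 / deg u) ∑ₓ P(L(x,v)) ≥ wt T + P(L(u,v))`.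
This is absurd, since `wt T > 0` and `P(L(u,v)) ≤ 1`: the walks from `u` that hit `v` only at
their last step are prefix-free, so their weights sum to at most `1`.
-/

/-- A nonempty list of vertices is a walk if consecutive vertices are joined by edges. -/
def IsWalk {V : Type*} (E : V → V → Prop) : List V → Prop
  | [] => False
  | [_] => True
  | a :: b :: t => E a b ∧ IsWalk E (b :: t)

/-- A digraph is connected if there is a directed walk between any two vertices. -/
def Conn {V : Type*} (E : V → V → Prop) : Prop :=
  ∀ a b : V, ∃ l : List V, IsWalk E l ∧ l.head? = some a ∧ l.getLast? = some b

/-- The out-neighbourhood of a vertex. -/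
def outNbrs {V : Type*} [Fintype V] (E : V → V → Prop) [DecidableRel E] (u : V) : Finset V :=
  Finset.univ.filter (fun x => E u x)

/-- The probability that a simple random walk (moving to a uniformly random out-neighbour
at each step) follows a given finite walk. -/
noncomputable def walkWt {V : Type*} [Fintype V] (E : V → V → Prop) [DecidableRel E] :
    List V → ℝ≥0∞
  | [] => 1
  | [_] => 1
  | a :: b :: t => ((outNbrs E a).card : ℝ≥0∞)⁻¹ * walkWt E (b :: t)

/-- `l` is a cover tour from `u` ending at `v`: a walk starting at `u`, visiting every
vertex, ending at `v`, with `v` first visited at the final step. -/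
def IsCoverTour {V : Type*} (E : V → V → Prop) (u v : V) (l : List V) : Prop :=
  IsWalk E l ∧ l.head? = some u ∧ l.getLast? = some v ∧ (∀ x : V, x ∈ l) ∧ v ∉ l.dropLast

/-- `P(L(u,v))`: the probability that a random cover tour from `u` ends at `v`,
i.e. that `v` is the last vertex to be first-visited by the random walk from `u`. -/
noncomputable def coverProb {V : Type*} [Fintype V] (E : V → V → Prop) [DecidableRel E]
    (u v : V) : ℝ≥0∞ :=
  ∑' l : {l : List V // IsCoverTour E u v l}, walkWt E (l : List V)

theorem le_inv_card_mul_sum_of_le {ι : Type*} {s : Finset ι} (hs : s.Nonempty) {c : ℝ≥0∞}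
    {f : ι → ℝ≥0∞} (h : ∀ i ∈ s, c ≤ f i) : c ≤ (s.card : ℝ≥0∞)⁻¹ * ∑ i ∈ s, f i :=
  calc c = (s.card : ℝ≥0∞)⁻¹ * (s.card * c) := by
        rw [← mul_assoc, ENNReal.inv_mul_cancel (Nat.cast_ne_zero.2 hs.card_ne_zero)
          (ENNReal.natCast_ne_top _), one_mul]
    _ ≤ (s.card : ℝ≥0∞)⁻¹ * ∑ i ∈ s, f i := by
        rw [← nsmul_eq_mul]
        gcongr
        exact Finset.card_nsmul_le_sum _ _ _ h

section

variable {V : Type*} {E : V → V → Prop}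

def IsHittingWalk (E : V → V → Prop) (a v : V) (l : List V) : Prop :=
  IsWalk E l ∧ l.head? = some a ∧ l.getLast? = some v ∧ v ∉ l.dropLast

theorem IsCoverTour.mem {u v : V} {l : List V} (h : IsCoverTour E u v l) (x : V) : x ∈ l :=
  h.2.2.2.1 x

theorem IsCoverTour.isHittingWalk {u v : V} {l : List V} (h : IsCoverTour E u v l) :
    IsHittingWalk E u v l :=
  ⟨h.1, h.2.1, h.2.2.1, h.2.2.2.2⟩

theorem IsHittingWalk.eq_singleton {v : V} {l : List V} (h : IsHittingWalk E v v l) :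
    l = [v] := by
  obtain ⟨-, hhead, -, hdrop⟩ := h
  rcases l with _ | ⟨a, _ | ⟨b, t⟩⟩ <;> simp_all

theorem IsHittingWalk.exists_cons_cons {a v : V} {l : List V} (hav : a ≠ v)
    (h : IsHittingWalk E a v l) :
    ∃ b t, l = a :: b :: t ∧ E a b ∧ IsHittingWalk E b v (b :: t) := by
  obtain ⟨hwalk, hhead, hlast, hdrop⟩ := h
  rcases l with _ | ⟨x, _ | ⟨b, t⟩⟩
  · simp at hhead
  · simp_all
  · obtain rfl : x = a := by simpa using hhead
    rw [List.getLast?_cons_cons] at hlast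
    rw [List.dropLast_cons_cons, List.mem_cons, not_or] at hdrop
    exact ⟨b, t, rfl, hwalk.1, hwalk.2, rfl, hlast, hdrop.2⟩

theorem IsCoverTour.cons {u x v : V} {l : List V} (hux : E u x) (huv : u ≠ v)
    (h : IsCoverTour E x v l) : IsCoverTour E u v (u :: l) := by
  obtain ⟨hwalk, hhead, hlast, hcover, hdrop⟩ := h
  rcases l with _ | ⟨y, t⟩
  · simp at hhead
  obtain rfl : y = x := by simpa using hhead
  refine ⟨⟨hux, hwalk⟩, rfl, by rwa [List.getLast?_cons_cons],
    fun z => List.mem_cons_of_mem _ (hcover z), ?_⟩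
  rw [List.dropLast_cons_cons, List.mem_cons, not_or]
  exact ⟨huv.symm, hdrop⟩

section Weights

variable [Fintype V] [DecidableRel E]

theorem walkWt_ne_zero : ∀ l : List V, walkWt E l ≠ 0
  | [] | [_] => one_ne_zero
  | _ :: b :: t => mul_ne_zero (ENNReal.inv_ne_zero.2 (ENNReal.natCast_ne_top _))
      (walkWt_ne_zero (b :: t))

theorem walkWt_cons (a : V) {l : List V} (hl : l ≠ []) :
    walkWt E (a :: l) = ((outNbrs E a).card : ℝ≥0∞)⁻¹ * walkWt E l := by
  obtain ⟨b, t, rfl⟩ := List.exists_cons_of_ne_nil hl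
  rfl

theorem sum_walkWt_le_one_of_length_le (v : V) (N : ℕ) :
    ∀ (a : V) (S : Finset (List V)), (∀ l ∈ S, l.length ≤ N ∧ IsHittingWalk E a v l) →
      ∑ l ∈ S, walkWt E l ≤ 1 := by
  induction N with
  | zero =>
    intro a S hS
    have hS_empty : S = ∅ := Finset.eq_empty_of_forall_notMem fun l hl => by
      obtain ⟨hlen, -, hhead, -⟩ := hS l hl
      simp_all
    simp [hS_empty]
  | succ N ih =>
    classical
    intro a S hS
    by_cases hav : a = v
    · subst hav
      have hsub : S ⊆ {[a]} := fun l hl => Finset.mem_singleton.2 (hS l hl).2.eq_singleton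
      calc ∑ l ∈ S, walkWt E l ≤ ∑ l ∈ {[a]}, walkWt E l := Finset.sum_le_sum_of_subset hsub
        _ = 1 := by simp [walkWt]
    have hdecomp : ∀ l ∈ S, ∃ b t, l = a :: b :: t ∧ E a b ∧ IsHittingWalk E b v (b :: t) :=
      fun l hl => (hS l hl).2.exists_cons_cons hav
    have hwt : ∀ l ∈ S, walkWt E l = ((outNbrs E a).card : ℝ≥0∞)⁻¹ * walkWt E l.tail := by
      intro l hl
      obtain ⟨b, t, rfl, -⟩ := hdecomp l hl
      rfl
    have htail_inj : Set.InjOn List.tail (S : Set (List V)) := by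
      intro l hl l' hl' h
      obtain ⟨b, t, rfl, -⟩ := hdecomp l hl
      obtain ⟨b', t', rfl, -⟩ := hdecomp l' hl'
      simp_all
    have hmaps : ∀ t ∈ S.image List.tail, t.headD a ∈ outNbrs E a := by
      intro t ht
      obtain ⟨l, hl, rfl⟩ := Finset.mem_image.1 ht
      obtain ⟨b, t', rfl, hab, -⟩ := hdecomp l hl
      simpa [outNbrs] using hab
    have hfibre : ∀ b ∈ outNbrs E a,
        ∑ t ∈ (S.image List.tail).filter (fun t => t.headD a = b), walkWt E t ≤ 1 := by
      intro b _
      refine ih b _ fun t ht => ?_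
      obtain ⟨htS, hb⟩ := Finset.mem_filter.1 ht
      obtain ⟨l, hl, rfl⟩ := Finset.mem_image.1 htS
      have hlen := (hS l hl).1
      obtain ⟨b', t', rfl, -, hwalk⟩ := hdecomp l hl
      obtain rfl : b' = b := hb
      exact ⟨by simpa using hlen, hwalk⟩
    calc ∑ l ∈ S, walkWt E l
        = ((outNbrs E a).card : ℝ≥0∞)⁻¹ * ∑ t ∈ S.image List.tail, walkWt E t := by
          rw [Finset.sum_image htail_inj, Finset.mul_sum]
          exact Finset.sum_congr rfl hwt
      _ = ((outNbrs E a).card : ℝ≥0∞)⁻¹ * ∑ b ∈ outNbrs E a,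
            ∑ t ∈ (S.image List.tail).filter (fun t => t.headD a = b), walkWt E t := by
          rw [Finset.sum_fiberwise_of_maps_to hmaps]
      _ ≤ ((outNbrs E a).card : ℝ≥0∞)⁻¹ * ∑ _b ∈ outNbrs E a, 1 := by
          gcongr with b hb
          exact hfibre b hb
      _ ≤ 1 := by simp

theorem sum_walkWt_le_one (a v : V) (S : Finset (List V))
    (hS : ∀ l ∈ S, IsHittingWalk E a v l) : ∑ l ∈ S, walkWt E l ≤ 1 :=
  sum_walkWt_le_one_of_length_le v (S.sup List.length) a S fun l hl =>
    ⟨Finset.le_sup hl, hS l hl⟩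

theorem coverProb_le_one (u v : V) : coverProb E u v ≤ 1 := by
  rw [coverProb, ENNReal.tsum_eq_iSup_sum]
  refine iSup_le fun s => ?_
  have h := sum_walkWt_le_one (E := E) u v (s.map (Function.Embedding.subtype _)) fun l hl => by
    obtain ⟨l', -, rfl⟩ := Finset.mem_map.1 hl
    exact l'.2.isHittingWalk
  rwa [Finset.sum_map] at h

theorem walkWt_add_inv_card_mul_sum_coverProb_le {u v : V} {t : List V} (huv : u ≠ v)
    (hT : IsCoverTour E u v (u :: t)) (hu : u ∉ t) :
    walkWt E (u :: t) + ((outNbrs E u).card : ℝ≥0∞)⁻¹ * ∑ x ∈ outNbrs E u, coverProb E x v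
      ≤ coverProb E u v := by
  let tour : {l // IsCoverTour E u v l} := ⟨u :: t, hT⟩
  let extend : (Σ x : outNbrs E u, {l // IsCoverTour E x v l}) → {l // IsCoverTour E u v l} :=
    fun p => ⟨u :: p.2, p.2.2.cons (Finset.mem_filter.1 p.1.2).2 huv⟩
  have hextend : Function.Injective extend := by
    rintro ⟨⟨x, hx⟩, ⟨l, hl⟩⟩ ⟨⟨y, hy⟩, ⟨l', hl'⟩⟩ h
    obtain rfl : l = l' := (List.cons.inj (congrArg Subtype.val h)).2
    obtain rfl : x = y := Option.some_injective _ (hl.2.1.symm.trans hl'.2.1)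
    rfl
  -- the tours in the range of `extend` revisit `u`, while `u :: t` does not
  have htour : ∀ p, extend p ≠ tour := fun p h =>
    hu ((List.cons.inj (congrArg Subtype.val h)).2 ▸ p.2.2.mem u)
  let tours : Unit ⊕ (Σ x : outNbrs E u, {l // IsCoverTour E x v l}) →
      {l // IsCoverTour E u v l} := Sum.elim (fun _ => tour) extend
  have hinj : Function.Injective tours :=
    Function.injective_of_subsingleton _ |>.sumElim hextend fun _ p h => htour p h.symm
  have hsum : ∑' p, walkWt E (extend p : List V)
      = ((outNbrs E u).card : ℝ≥0∞)⁻¹ * ∑ x ∈ outNbrs E u, coverProb E x v := by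
    rw [ENNReal.tsum_sigma', Finset.mul_sum, ← Finset.tsum_subtype]
    refine tsum_congr fun x => ?_
    rw [coverProb, ← ENNReal.tsum_mul_left]
    exact tsum_congr fun l => walkWt_cons u (List.ne_nil_of_mem (l.2.mem u))
  calc walkWt E (u :: t) + ((outNbrs E u).card : ℝ≥0∞)⁻¹ * ∑ x ∈ outNbrs E u, coverProb E x v
      = ∑' i, walkWt E (tours i : List V) := by
        rw [ENNReal.summable.tsum_sum ENNReal.summable, tsum_fintype, Fintype.sum_unique, ← hsum]
        rfl
    _ ≤ coverProb E u v := ENNReal.tsum_comp_le_tsum_of_injective hinj _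

end Weights

end

theorem stmt15_general {V : Type*} [Fintype V] [DecidableEq V] (E : V → V → Prop) [DecidableRel E]
    (u v : V) (hne : u ≠ v)
    (hle : ∀ x : V, E u x → coverProb E u v ≤ coverProb E x v) :
    ∀ T : List V, IsCoverTour E u v T → 2 ≤ T.count u := by
  intro T hT
  by_contra! hcount
  obtain ⟨t, rfl⟩ : ∃ t, T = u :: t := List.head?_eq_some_iff.1 hT.2.1
  have hu : u ∉ t := List.count_eq_zero.1 (by rw [List.count_cons_self] at hcount; omega)
  obtain ⟨b, -, -, hub, -⟩ := hT.isHittingWalk.exists_cons_cons hne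
  have hfin : coverProb E u v ≠ ⊤ := ne_top_of_le_ne_top ENNReal.one_ne_top (coverProb_le_one u v)
  have hmean : coverProb E u v
      ≤ ((outNbrs E u).card : ℝ≥0∞)⁻¹ * ∑ x ∈ outNbrs E u, coverProb E x v :=
    le_inv_card_mul_sum_of_le ⟨b, Finset.mem_filter.2 ⟨Finset.mem_univ _, hub⟩⟩
      fun x hx => hle x (Finset.mem_filter.1 hx).2
  refine lt_irrefl (coverProb E u v) ?_
  calc coverProb E u v < walkWt E (u :: t) + coverProb E u v := by
        rw [add_comm]
        exact ENNReal.lt_add_right hfin (walkWt_ne_zero _)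
    _ ≤ walkWt E (u :: t)
          + ((outNbrs E u).card : ℝ≥0∞)⁻¹ * ∑ x ∈ outNbrs E u, coverProb E x v := by
        gcongr
    _ ≤ coverProb E u v := walkWt_add_inv_card_mul_sum_coverProb_le hne hT hu

/-- If there is no edge from `u` to `v`, some cover tour from `u` to `v` exists, and
`P(L(u,v)) ≤ P(L(x,v))` for every out-neighbour `x` of `u`, then every cover tour from
`u` to `v` revisits `u`. -/
theorem stmt15 {V : Type*} [Fintype V] [DecidableEq V] (E : V → V → Prop) [DecidableRel E]
    (hconn : Conn E) (u v : V) (hne : u ≠ v) (huv : ¬ E u v)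
    (hex : ∃ T : List V, IsCoverTour E u v T)
    (hle : ∀ x : V, E u x → coverProb E u v ≤ coverProb E x v) :
    ∀ T : List V, IsCoverTour E u v T → 2 ≤ T.count u :=
  stmt15_general E u v hne hle
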